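/- For every h > 0, the exterior Abelian integral I₄ is differentiable at h and its derivative satisfies I₄'(h) = (4h·I₀(h) + 5·I₂(h)) / (4h + 1). -/

import Mathlib

open MeasureTheory

/-- Endpoint `a(h) = √(1 + √(1+4h))` of the exterior oval of the Duffing Hamiltonian
`H(x,y) = y²/2 − x²/2 + x⁴/4`. -/
noncomputable def aext (h : ℝ) : ℝ := Real.sqrt (1 + Real.sqrt (1 + 4*h))

/-- The exterior Abelian integrals `I_i(h) = 2∫_{−a(h)}^{a(h)} xⁱ √(2h + x² − x⁴/2) dx`. -/
noncomputable def Iext (i : ℕ) (h : ℝ) : ℝ :=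
  2 * ∫ x in (-aext h)..aext h, x ^ i * Real.sqrt (2*h + x^2 - x^4/2)

open Real intervalIntegral Topology Filter

noncomputable def sfn (t : ℝ) : ℝ := Real.sqrt (1 + 4*t)

noncomputable def wfn (t θ : ℝ) : ℝ :=
  Real.sqrt (((1 + sfn t) * Real.sin θ ^ 2 + (sfn t - 1)) / 2)

noncomputable def Fd (t θ : ℝ) : ℝ :=
  2 * (1 + sfn t) ^ 3 * Real.sin θ ^ 4 * Real.cos θ ^ 2 * wfn t θ

noncomputable def Fd' (t θ : ℝ) : ℝ :=
  2 * Real.sin θ ^ 4 * Real.cos θ ^ 2 *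
    (6 * (1 + sfn t) ^ 2 * wfn t θ +
      (1 + sfn t) ^ 3 * (Real.sin θ ^ 2 + 1) / (2 * wfn t θ)) / sfn t

lemma one_lt_sfn {t : ℝ} (ht : 0 < t) : 1 < sfn t := by
  have : (1:ℝ) < 1 + 4*t := by linarith
  unfold sfn
  nlinarith [Real.sq_sqrt (by linarith : (0:ℝ) ≤ 1 + 4*t),
    Real.sqrt_nonneg (1 + 4*t)]

lemma sfn_nonneg (t : ℝ) : 0 ≤ sfn t := Real.sqrt_nonneg _

lemma sfn_sq {t : ℝ} (ht : 0 < t) : sfn t ^ 2 = 1 + 4*t :=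
  Real.sq_sqrt (by linarith)

lemma sfn_mono {t₁ t₂ : ℝ} (h : t₁ ≤ t₂) : sfn t₁ ≤ sfn t₂ :=
  Real.sqrt_le_sqrt (by linarith)

lemma wfn_arg_pos {t : ℝ} (ht : 0 < t) (θ : ℝ) :
    0 < ((1 + sfn t) * Real.sin θ ^ 2 + (sfn t - 1)) / 2 := by
  have h1 := one_lt_sfn ht
  have h2 : 0 ≤ (1 + sfn t) * Real.sin θ ^ 2 := by positivity
  linarith

lemma wfn_pos {t : ℝ} (ht : 0 < t) (θ : ℝ) : 0 < wfn t θ :=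
  Real.sqrt_pos.mpr (wfn_arg_pos ht θ)

lemma wfn_sq {t : ℝ} (ht : 0 < t) (θ : ℝ) :
    wfn t θ ^ 2 = ((1 + sfn t) * Real.sin θ ^ 2 + (sfn t - 1)) / 2 :=
  Real.sq_sqrt (wfn_arg_pos ht θ).le

lemma continuous_wfn (t : ℝ) : Continuous (wfn t) := by
  unfold wfn; fun_prop

lemma hasDerivAt_sfn {t : ℝ} (ht : 0 < t) : HasDerivAt sfn (2 / sfn t) t := by
  have h1 : (0:ℝ) < 1 + 4*t := by linarith
  have hinner : HasDerivAt (fun x : ℝ => 1 + 4*x) 4 t := by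
    simpa using ((hasDerivAt_id t).const_mul (4:ℝ)).const_add 1
  have := (Real.hasDerivAt_sqrt h1.ne').comp t hinner
  simp only [Function.comp_def] at this
  refine this.congr_deriv (Eq.symm ?_)
  unfold sfn
  have : Real.sqrt (1 + 4*t) ≠ 0 := by positivity
  field_simp
  ring

lemma hasDerivAt_wfn_t {t : ℝ} (ht : 0 < t) (θ : ℝ) :
    HasDerivAt (fun t => wfn t θ)
      ((Real.sin θ ^ 2 + 1) / (2 * sfn t * wfn t θ)) t := by
  have hs := hasDerivAt_sfn ht
  have hs1 := one_lt_sfn ht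
  have hargpos := wfn_arg_pos ht θ
  have hinner : HasDerivAt
      (fun t => ((1 + sfn t) * Real.sin θ ^ 2 + (sfn t - 1)) / 2)
      (((2 / sfn t) * Real.sin θ ^ 2 + 2 / sfn t) / 2) t := by
    exact (((hs.const_add 1).mul_const _).add (hs.sub_const 1)).div_const 2
  have := (Real.hasDerivAt_sqrt hargpos.ne').comp t hinner
  simp only [Function.comp_def] at this
  refine this.congr_deriv (Eq.symm ?_)
  unfold wfn
  have hw := wfn_pos ht θ
  unfold wfn at hw
  have hsne : sfn t ≠ 0 := by positivity
  field_simp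

lemma hasDerivAt_Fd {t : ℝ} (ht : 0 < t) (θ : ℝ) :
    HasDerivAt (fun t => Fd t θ) (Fd' t θ) t := by
  have hs := hasDerivAt_sfn ht
  have hw := hasDerivAt_wfn_t ht θ
  have hs1 := one_lt_sfn ht
  have hwpos := wfn_pos ht θ
  have hp : HasDerivAt (fun t => (1 + sfn t) ^ 3)
      ((3:ℕ) * (1 + sfn t) ^ (3-1) * (2 / sfn t)) t := (hs.const_add 1).pow 3
  have hmain := ((((hp.const_mul (2:ℝ)).mul_const (Real.sin θ ^ 4)).mul_const
      (Real.cos θ ^ 2)).mul hw)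
  unfold Fd Fd'
  refine hmain.congr_deriv (Eq.symm ?_)
  have hsne : sfn t ≠ 0 := by positivity
  have hwne : wfn t θ ≠ 0 := hwpos.ne'
  field_simp
  ring

lemma point_sqrt {t : ℝ} (ht : 0 < t) {θ : ℝ}
    (hθ : θ ∈ Set.Icc (-(π/2)) (π/2)) :
    Real.sqrt (2*t + (aext t * Real.sin θ)^2 - (aext t * Real.sin θ)^4/2) =
      aext t * Real.cos θ * wfn t θ := by
  have hcos : 0 ≤ Real.cos θ := Real.cos_nonneg_of_mem_Icc hθ
  have hs1 := one_lt_sfn ht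
  have hs2 := sfn_sq ht
  have huv := Real.sin_sq_add_cos_sq θ
  have hp : (0:ℝ) < 1 + sfn t := by linarith
  have ha2 : aext t ^ 2 = 1 + sfn t := Real.sq_sqrt hp.le
  have key : 2*t + (aext t * Real.sin θ)^2 - (aext t * Real.sin θ)^4/2 =
      ((1 + sfn t) * Real.cos θ ^ 2) *
        (((1 + sfn t) * Real.sin θ ^ 2 + (sfn t - 1)) / 2) := by
    linear_combination (Real.sin θ ^ 2 - Real.sin θ ^ 4 *
        (aext t ^ 2 + 1 + sfn t)/2) * ha2 - (1/2) * hs2 -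
      ((1 + sfn t) * ((1 + sfn t) * Real.sin θ ^ 2 + (sfn t - 1)) / 2) * huv
  rw [key, Real.sqrt_mul (by positivity), ← wfn]
  congr 1
  rw [Real.sqrt_mul hp.le, Real.sqrt_sq hcos]
  rfl

lemma subst_help {t : ℝ} (ht : 0 < t) (g : ℝ → ℝ) (hg : Continuous g) :
    ∫ x in (-aext t)..(aext t), g x =
      ∫ θ in (-(π/2))..(π/2), (aext t * Real.cos θ) * g (aext t * Real.sin θ) := by
  have h := intervalIntegral.integral_comp_smul_deriv
    (f := fun θ => aext t * Real.sin θ) (f' := fun θ => aext t * Real.cos θ)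
    (g := g) (a := -(π/2)) (b := π/2)
    (fun θ _ => (Real.hasDerivAt_sin θ).const_mul (aext t))
    (by fun_prop) hg
  simp only [smul_eq_mul, Function.comp, Real.sin_pi_div_two, Real.sin_neg,
    mul_one, mul_neg_one] at h
  rw [← h]

lemma Iext_zero {t : ℝ} (ht : 0 < t) :
    Iext 0 t = ∫ θ in (-(π/2))..(π/2),
      2 * (1 + sfn t) * Real.cos θ ^ 2 * wfn t θ := by
  unfold Iext
  rw [subst_help ht _ (by fun_prop), ← intervalIntegral.integral_const_mul]
  apply intervalIntegral.integral_congr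
  intro θ hθ
  have hθ' : θ ∈ Set.Icc (-(π/2)) (π/2) := by
    rwa [Set.uIcc_of_le (by linarith [Real.pi_pos])] at hθ
  have hp : (0:ℝ) < 1 + sfn t := by linarith [one_lt_sfn ht]
  have ha2 : aext t ^ 2 = 1 + sfn t := Real.sq_sqrt hp.le
  simp only
  rw [point_sqrt ht hθ']
  linear_combination (2 * Real.cos θ ^ 2 * wfn t θ) * ha2

lemma Iext_two {t : ℝ} (ht : 0 < t) :
    Iext 2 t = ∫ θ in (-(π/2))..(π/2),
      2 * (1 + sfn t) ^ 2 * Real.sin θ ^ 2 * Real.cos θ ^ 2 * wfn t θ := by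
  unfold Iext
  rw [subst_help ht _ (by fun_prop), ← intervalIntegral.integral_const_mul]
  apply intervalIntegral.integral_congr
  intro θ hθ
  have hθ' : θ ∈ Set.Icc (-(π/2)) (π/2) := by
    rwa [Set.uIcc_of_le (by linarith [Real.pi_pos])] at hθ
  have hp : (0:ℝ) < 1 + sfn t := by linarith [one_lt_sfn ht]
  have ha2 : aext t ^ 2 = 1 + sfn t := Real.sq_sqrt hp.le
  simp only
  rw [point_sqrt ht hθ']
  linear_combination (2 * Real.sin θ ^ 2 * Real.cos θ ^ 2 * wfn t θ *
    (aext t ^ 2 + (1 + sfn t))) * ha2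

lemma Iext_four {t : ℝ} (ht : 0 < t) :
    Iext 4 t = ∫ θ in (-(π/2))..(π/2), Fd t θ := by
  unfold Iext
  rw [subst_help ht _ (by fun_prop), ← intervalIntegral.integral_const_mul]
  apply intervalIntegral.integral_congr
  intro θ hθ
  have hθ' : θ ∈ Set.Icc (-(π/2)) (π/2) := by
    rwa [Set.uIcc_of_le (by linarith [Real.pi_pos])] at hθ
  have hp : (0:ℝ) < 1 + sfn t := by linarith [one_lt_sfn ht]
  have ha2 : aext t ^ 2 = 1 + sfn t := Real.sq_sqrt hp.le
  simp only [Fd]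
  rw [point_sqrt ht hθ']
  linear_combination (2 * Real.sin θ ^ 4 * Real.cos θ ^ 2 * wfn t θ *
    (aext t ^ 4 + aext t ^ 2 * (1 + sfn t) + (1 + sfn t) ^ 2)) * ha2

lemma continuous_Fd' {h : ℝ} (hh : 0 < h) : Continuous (Fd' h) := by
  have hw : Continuous (wfn h) := continuous_wfn h
  have hwne : ∀ θ, 2 * wfn h θ ≠ 0 := fun θ =>
    ne_of_gt (by have := wfn_pos hh θ; linarith)
  unfold Fd'
  apply Continuous.div_const
  apply Continuous.mul (by fun_prop)
  exact (continuous_const.mul hw).add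
    (Continuous.div (by fun_prop) (continuous_const.mul hw) hwne)

lemma hasDerivAt_integral_Fd {h : ℝ} (hh : 0 < h) :
    HasDerivAt (fun t => ∫ θ in (-(π/2))..(π/2), Fd t θ)
      (∫ θ in (-(π/2))..(π/2), Fd' h θ) h := by
  have hcontF : ∀ t, Continuous (Fd t) := by
    intro t
    unfold Fd wfn sfn
    fun_prop
  set s1 : ℝ := sfn (3*h/2) with hs1def
  set w0 : ℝ := Real.sqrt ((sfn (h/2) - 1) / 2) with hw0def
  have hs1gt : 1 < s1 := one_lt_sfn (by linarith)
  have hw0pos : 0 < w0 := by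
    rw [hw0def]
    exact Real.sqrt_pos.mpr (by have := one_lt_sfn (half_pos hh); linarith)
  set M : ℝ := 12 * (1 + s1) ^ 2 * Real.sqrt s1 + 2 * (1 + s1) ^ 3 / w0 with hM
  have hbound : ∀ θ : ℝ, ∀ t ∈ Metric.ball h (h/2), ‖Fd' t θ‖ ≤ M := by
    intro θ t htb
    rw [Metric.mem_ball, Real.dist_eq, abs_lt] at htb
    have ht0 : 0 < t := by linarith
    have hst1 : 1 < sfn t := one_lt_sfn ht0
    have hsle : sfn t ≤ s1 := sfn_mono (by linarith)
    have hwpos := wfn_pos ht0 θ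
    have hw0le : w0 ≤ wfn t θ := by
      rw [hw0def]
      apply Real.sqrt_le_sqrt
      have h1 : sfn (h/2) ≤ sfn t := sfn_mono (by linarith)
      nlinarith [sq_nonneg (Real.sin θ), sfn_nonneg t]
    have hwle : wfn t θ ≤ Real.sqrt s1 := by
      unfold wfn
      apply Real.sqrt_le_sqrt
      nlinarith [Real.sin_sq_le_one θ]
    have hFnonneg : 0 ≤ Fd' t θ := by
      unfold Fd' wfn sfn
      positivity
    rw [Real.norm_eq_abs, abs_of_nonneg hFnonneg]
    have hss1 : Real.sqrt s1 ≤ Real.sqrt s1 := le_refl _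
    have hsin4 : Real.sin θ ^ 4 ≤ 1 := by nlinarith [Real.sin_sq_le_one θ, sq_nonneg (Real.sin θ)]
    have hcos2 : Real.cos θ ^ 2 ≤ 1 := Real.cos_sq_le_one θ
    have hXnn : (0:ℝ) ≤ 6 * (1 + sfn t) ^ 2 * wfn t θ +
        (1 + sfn t) ^ 3 * (Real.sin θ ^ 2 + 1) / (2 * wfn t θ) := by
      have h1 : (0:ℝ) ≤ 1 + sfn t := by linarith
      positivity
    calc Fd' t θ ≤ 2 * Real.sin θ ^ 4 * Real.cos θ ^ 2 *
          (6 * (1 + sfn t) ^ 2 * wfn t θ +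
            (1 + sfn t) ^ 3 * (Real.sin θ ^ 2 + 1) / (2 * wfn t θ)) := by
          unfold Fd'
          apply div_le_self (by positivity) hst1.le
      _ ≤ 2 * 1 * 1 * (6 * (1 + s1) ^ 2 * Real.sqrt s1 +
            (1 + s1) ^ 3 * 2 / (2 * w0)) := by
          have h1 : (0:ℝ) ≤ 1 + sfn t := by linarith
          gcongr
          · nlinarith [Real.sin_sq_le_one θ]
      _ = M := by
          rw [hM]
          field_simp
          ring
  have key := intervalIntegral.hasDerivAt_integral_of_dominated_loc_of_deriv_le
    (μ := volume) (F := Fd) (F' := Fd') (a := -(π/2)) (b := π/2) (x₀ := h) (s := Metric.ball h (h/2))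
    (bound := fun _ => M) (Metric.ball_mem_nhds h (by linarith))
    (Filter.Eventually.of_forall fun t => (hcontF t).aestronglyMeasurable)
    ((hcontF h).intervalIntegrable _ _)
    (continuous_Fd' hh).aestronglyMeasurable
    (Filter.Eventually.of_forall fun θ _ => hbound θ)
    (intervalIntegrable_const)
    (Filter.Eventually.of_forall fun θ _ t htb => by
      rw [Metric.mem_ball, Real.dist_eq, abs_lt] at htb
      exact hasDerivAt_Fd (by linarith) θ)
  exact key.2

lemma hasDerivAt_wfn_theta {t : ℝ} (ht : 0 < t) (θ : ℝ) :
    HasDerivAt (wfn t)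
      ((1 + sfn t) * Real.sin θ * Real.cos θ / (2 * wfn t θ)) θ := by
  have hargpos := wfn_arg_pos ht θ
  have hinner : HasDerivAt
      (fun θ => ((1 + sfn t) * Real.sin θ ^ 2 + (sfn t - 1)) / 2)
      (((1 + sfn t) * ((2:ℕ) * Real.sin θ ^ (2-1) * Real.cos θ)) / 2) θ := by
    exact ((((Real.hasDerivAt_sin θ).pow 2).const_mul _).add_const _).div_const 2
  have hcomp := (Real.hasDerivAt_sqrt hargpos.ne').comp θ hinner
  simp only [Function.comp_def] at hcomp
  unfold wfn
  refine hcomp.congr_deriv (Eq.symm ?_)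
  have hw := wfn_pos ht θ
  unfold wfn at hw
  field_simp
  ring

lemma key_alg (u v w s t : ℝ) (hs : 0 < s) (hw : 0 < w)
    (huv : u^2 + v^2 = 1) (hw2 : w^2 = ((1+s)*u^2 + (s-1))/2)
    (hs2 : s^2 = 1+4*t) :
    (4*t+1) * (2*u^4*v^2*(6*(1+s)^2*w + (1+s)^3*(u^2+1)/(2*w))/s)
      - (4*t*(2*(1+s)*v^2*w) + 5*(2*(1+s)^2*u^2*v^2*w))
    = 2*(s*(1+s)^2*(5*u^4*v) - 4*t*(1+s)*v - (1+s)^2*(3*u^2*v)) * (v*w)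
      + 2*(s*(1+s)^2*u^5 - 4*t*(1+s)*u - (1+s)^2*u^3) *
        (-u*w + v*((1+s)*u*v/(2*w))) := by
  have hsne := hs.ne'
  have hwne := hw.ne'
  field_simp
  linear_combination ((48 : ℝ) * u^4 * w^2 * s * t + (4 : ℝ) * u^6 * s^2 * t + (4 : ℝ) * u^4 * s^2 * t + (8 : ℝ) * u^6 * s * t + (8 : ℝ) * u^4 * s * t + (48 : ℝ) * u^4 * w^2 * t + (4 : ℝ) * u^6 * t + (4 : ℝ) * u^4 * t + (12 : ℝ) * u^4 * w^2 * s + (3 : ℝ) * u^4 * s^2 + (2 : ℝ) * u^6 * s + (3 : ℝ) * u^4 * s + (12 : ℝ) * u^4 * w^2 + (1 : ℝ) * u^6 + (1 : ℝ) * u^4 + (-4 : ℝ) * u^2 * w^2 * s^2 + (-4 : ℝ) * u^2 * w^2 * s + (-10 : ℝ) * u^4 * w^2 * s^3 + (-10 : ℝ) * u^4 * w^2 * s^2 + (-1 : ℝ) * u^6 * s^4 + (-2 : ℝ) * u^6 * s^3 + (4 : ℝ) * u^2 * s^2 * t + (4 : ℝ) * u^2 * s * t + (1 : ℝ) * u^4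 * s^3) * huv + ((12 : ℝ) * u^6 * s^3 + (12 : ℝ) * u^6 * s^2 + (-8 : ℝ) * u^2 * s * t + (-8 : ℝ) * u^4 * s^2 + (14 : ℝ) * u^4 * s + (-48 : ℝ) * u^6 * s * t + (48 : ℝ) * u^4 * s * t + (-48 : ℝ) * u^6 * t + (48 : ℝ) * u^4 * t + (-12 : ℝ) * u^6 * s + (-12 : ℝ) * u^6 + (12 : ℝ) * u^4 + (-4 : ℝ) * u^2 * s^2 + (-4 : ℝ) * u^2 * s + (-10 : ℝ) * u^4 * s^3) * hw2 + ((7 : ℝ) * u^8 * s^2 + (14 : ℝ) * u^8 * s + (7 : ℝ) * u^8 + (5 : ℝ) * u^4 + (-2 : ℝ) * u^2 * s + (-5 : ℝ) * u^4 * s^2 + (-12 : ℝ) * u^6 * s + (-12 : ℝ) * u^6) * hs2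

lemma integral_Fd' {h : ℝ} (hh : 0 < h) :
    ∫ θ in (-(π/2))..(π/2), Fd' h θ =
      (4*h * Iext 0 h + 5 * Iext 2 h) / (4*h + 1) := by
  have hwcont := continuous_wfn h
  have hcont0 : Continuous (fun θ => 2 * (1 + sfn h) * Real.cos θ ^ 2 * wfn h θ) := by
    fun_prop
  have hcont2 : Continuous (fun θ =>
      2 * (1 + sfn h) ^ 2 * Real.sin θ ^ 2 * Real.cos θ ^ 2 * wfn h θ) := by
    fun_prop
  have key : ∫ θ in (-(π/2))..(π/2),
      ((4*h+1) * Fd' h θ -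
        (4*h*(2 * (1 + sfn h) * Real.cos θ ^ 2 * wfn h θ) +
         5*(2 * (1 + sfn h) ^ 2 * Real.sin θ ^ 2 * Real.cos θ ^ 2 * wfn h θ))) = 0 := by
    have hderiv : ∀ θ ∈ Set.uIcc (-(π/2)) (π/2),
        HasDerivAt (fun θ => 2*(sfn h*(1+sfn h)^2*Real.sin θ^5 -
            4*h*(1+sfn h)*Real.sin θ - (1+sfn h)^2*Real.sin θ^3) *
            (Real.cos θ * wfn h θ))
          ((4*h+1) * Fd' h θ -
            (4*h*(2 * (1 + sfn h) * Real.cos θ ^ 2 * wfn h θ) +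
             5*(2 * (1 + sfn h) ^ 2 * Real.sin θ ^ 2 * Real.cos θ ^ 2 * wfn h θ))) θ := by
      intro θ _
      have hu := Real.hasDerivAt_sin θ
      have hv := Real.hasDerivAt_cos θ
      have hw := hasDerivAt_wfn_theta hh θ
      have hA : HasDerivAt (fun θ => 2*(sfn h*(1+sfn h)^2*Real.sin θ^5 -
          4*h*(1+sfn h)*Real.sin θ - (1+sfn h)^2*Real.sin θ^3))
          (2*(sfn h*(1+sfn h)^2*(5*Real.sin θ^4*Real.cos θ) -
          4*h*(1+sfn h)*Real.cos θ - (1+sfn h)^2*(3*Real.sin θ^2*Real.cos θ))) θ := by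
        have := ((((hu.pow 5).const_mul (sfn h*(1+sfn h)^2)).sub
          (hu.const_mul (4*h*(1+sfn h)))).sub
          ((hu.pow 3).const_mul ((1+sfn h)^2))).const_mul 2
        refine this.congr_deriv (Eq.symm ?_)
        norm_num
      have hB : HasDerivAt (fun θ => Real.cos θ * wfn h θ)
          (-Real.sin θ * wfn h θ +
            Real.cos θ * ((1 + sfn h) * Real.sin θ * Real.cos θ / (2 * wfn h θ))) θ :=
        hv.mul hw
      have hΦ := hA.mul hB
      refine hΦ.congr_deriv (Eq.symm ?_)
      unfold Fd'
      linear_combination key_alg (Real.sin θ) (Real.cos θ) (wfn h θ) (sfn h) h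
        (by linarith [one_lt_sfn hh]) (wfn_pos hh θ)
        (Real.sin_sq_add_cos_sq θ) (wfn_sq hh θ) (sfn_sq hh)
    rw [intervalIntegral.integral_eq_sub_of_hasDerivAt hderiv (by
      apply Continuous.intervalIntegrable
      have := continuous_Fd' hh
      fun_prop)]
    simp [Real.cos_pi_div_two]
  rw [intervalIntegral.integral_sub (f := fun θ => (4*h+1) * Fd' h θ)
      (g := fun θ => 4*h*(2 * (1 + sfn h) * Real.cos θ ^ 2 * wfn h θ) +
        5*(2 * (1 + sfn h) ^ 2 * Real.sin θ ^ 2 * Real.cos θ ^ 2 * wfn h θ))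
      ((continuous_const.mul (continuous_Fd' hh)).intervalIntegrable _ _)
      (((continuous_const.mul hcont0).add
        (continuous_const.mul hcont2)).intervalIntegrable _ _),
    intervalIntegral.integral_add (f := fun θ => 4*h*(2 * (1 + sfn h) * Real.cos θ ^ 2 * wfn h θ))
        (g := fun θ => 5*(2 * (1 + sfn h) ^ 2 * Real.sin θ ^ 2 * Real.cos θ ^ 2 * wfn h θ))
      ((continuous_const.mul hcont0).intervalIntegrable _ _)
      ((continuous_const.mul hcont2).intervalIntegrable _ _),
    intervalIntegral.integral_const_mul, intervalIntegral.integral_const_mul,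
    intervalIntegral.integral_const_mul, ← Iext_zero hh, ← Iext_two hh] at key
  rw [eq_div_iff (by positivity : (4*h+1) ≠ 0)]
  linarith

theorem deriv_I4_exterior (h : ℝ) (hh : 0 < h) :
    HasDerivAt (Iext 4) ((4*h * Iext 0 h + 5 * Iext 2 h) / (4*h + 1)) h := by
  have hEv : Iext 4 =ᶠ[𝓝 h] (fun t => ∫ θ in (-(π/2))..(π/2), Fd t θ) :=
    Filter.eventuallyEq_of_mem (Ioi_mem_nhds hh) (fun t ht => Iext_four ht)
  have hd := hasDerivAt_integral_Fd hh
  rw [integral_Fd' hh] at hd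
  exact hd.congr_of_eventuallyEq hEv
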